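/- arXiv:1012.4401 — 6 statements merged into one kernel-verified Lean document; each statement's English description precedes it below -/
import Mathlib

section
/- For a probability distribution P on a finite alphabet X and any α > 1, the Rényi entropy satisfies H_α(P) = min over all probability distributions Q on X of [ (α/(α−1))·D(Q‖P) + H(Q) ], where the minimum is attained. -/
open scoped Classical BigOperators

noncomputable def shannonEntropy {X : Type*} [Fintype X] (Q : X → ℝ) : ℝ :=
  -∑ x, Q x * Real.log (Q x)

noncomputable def klDiv {X : Type*} [Fintype X] (Q P : X → ℝ) : EReal :=
  if ∀ x, 0 < Q x → 0 < P x then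
    ((∑ x, Q x * Real.log (Q x / P x) : ℝ) : EReal)
  else ⊤

noncomputable def renyiEntropy {X : Type*} [Fintype X] (α : ℝ) (P : X → ℝ) : ℝ :=
  (1 / (1 - α)) * Real.log (∑ x, P x ^ α)

noncomputable def renyiDiv {X : Type*} [Fintype X] (α : ℝ) (P1 P2 : X → ℝ) : EReal :=
  if 1 < α ∧ ¬ (∀ x, 0 < P1 x → 0 < P2 x) then ⊤
  else if ∀ x, ¬ (0 < P1 x ∧ 0 < P2 x) then ⊤
  else ((1 / (α - 1)) *
      Real.log (∑ x, if 0 < P1 x ∧ 0 < P2 x then P1 x ^ α * P2 x ^ (1 - α) else 0) : ℝ)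

def IsPMF {X : Type*} [Fintype X] (P : X → ℝ) : Prop :=
  (∀ x, 0 ≤ P x) ∧ ∑ x, P x = 1

/-!
For `Q ≪ P` the objective splits as
`α/(α-1) · D(Q‖P) + H(Q) = H_α(P) + D(Q‖P_α) / (α-1)`,
where `P_α = P^α / ∑ P^α` is the escort distribution of `P`. Since `α > 1`, Gibbs' inequality
`D(Q‖P_α) ≥ 0` gives the lower bound, with equality at `Q = P_α`; if `Q` is not absolutely
continuous with respect to `P` the objective is `⊤`.
-/

lemma sub_le_mul_log_div {q r : ℝ} (hq : 0 ≤ q) (hr : 0 ≤ r) (hqr : 0 < q → 0 < r) :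
    q - r ≤ q * Real.log (q / r) := by
  rcases hq.eq_or_lt with rfl | hq
  · simpa using hr
  have h := Real.one_sub_inv_le_log_of_pos (div_pos hq (hqr hq))
  calc q - r = q * (1 - (q / r)⁻¹) := by field_simp
    _ ≤ q * Real.log (q / r) := mul_le_mul_of_nonneg_left h hq.le

section

variable {X : Type*} [Fintype X]

theorem IsPMF.sum_mul_log_div_nonneg {Q R : X → ℝ} (hQ : IsPMF Q) (hR : IsPMF R)
    (hQR : ∀ x, 0 < Q x → 0 < R x) :
    0 ≤ ∑ x, Q x * Real.log (Q x / R x) :=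
  calc (0 : ℝ) = ∑ x, Q x - ∑ x, R x := by rw [hQ.2, hR.2, sub_self]
    _ = ∑ x, (Q x - R x) := (Finset.sum_sub_distrib ..).symm
    _ ≤ _ := Finset.sum_le_sum fun x _ => sub_le_mul_log_div (hQ.1 x) (hR.1 x) (hQR x)

theorem IsPMF.exists_pos {P : X → ℝ} (hP : IsPMF P) : ∃ x, 0 < P x := by
  by_contra! h
  have : ∑ x, P x = 0 := Finset.sum_eq_zero fun x _ => le_antisymm (h x) (hP.1 x)
  simp [hP.2] at this

theorem IsPMF.sum_rpow_pos {P : X → ℝ} (hP : IsPMF P) (α : ℝ) : 0 < ∑ x, P x ^ α := by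
  obtain ⟨x, hx⟩ := hP.exists_pos
  exact Finset.sum_pos' (fun y _ => Real.rpow_nonneg (hP.1 y) α)
    ⟨x, Finset.mem_univ x, Real.rpow_pos_of_pos hx α⟩

noncomputable def escort (α : ℝ) (P : X → ℝ) (x : X) : ℝ :=
  P x ^ α / ∑ y, P y ^ α

theorem isPMF_escort {P : X → ℝ} (hP : IsPMF P) (α : ℝ) : IsPMF (escort α P) :=
  ⟨fun x => div_nonneg (Real.rpow_nonneg (hP.1 x) α) (hP.sum_rpow_pos α).le,
    by simp only [escort]; rw [← Finset.sum_div, div_self (hP.sum_rpow_pos α).ne']⟩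

theorem IsPMF.escort_pos_iff {P : X → ℝ} (hP : IsPMF P) {α : ℝ} (hα : α ≠ 0) (x : X) :
    0 < escort α P x ↔ 0 < P x := by
  rw [escort, div_pos_iff_of_pos_right (hP.sum_rpow_pos α)]
  rcases (hP.1 x).eq_or_lt with h | h
  · simp [← h, Real.zero_rpow hα]
  · simp [h, Real.rpow_pos_of_pos h α]

theorem IsPMF.klDiv_add_entropy_eq {P Q : X → ℝ} (hP : IsPMF P) (hQ : IsPMF Q)
    (hQP : ∀ x, 0 < Q x → 0 < P x) {α : ℝ} (hα : α ≠ 1) :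
    α / (α - 1) * ∑ x, Q x * Real.log (Q x / P x) + shannonEntropy Q =
      renyiEntropy α P + 1 / (α - 1) * ∑ x, Q x * Real.log (Q x / escort α P x) := by
  set S := ∑ x, P x ^ α
  have hS := hP.sum_rpow_pos α
  have term : ∀ x, α / (α - 1) * (Q x * Real.log (Q x / P x)) - Q x * Real.log (Q x) =
      Q x * (1 / (1 - α) * Real.log S) +
        1 / (α - 1) * (Q x * Real.log (Q x / escort α P x)) := by
    intro x
    rcases (hQ.1 x).eq_or_lt with h | hQx
    · simp [← h]
    have hPx := hQP x hQx
    have hPα := Real.rpow_pos_of_pos hPx α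
    rw [escort, Real.log_div hQx.ne' hPx.ne', Real.log_div hQx.ne' (div_pos hPα hS).ne',
      Real.log_div hPα.ne' hS.ne', Real.log_rpow hPx]
    field_simp
    ring
  rw [shannonEntropy, renyiEntropy, Finset.mul_sum, Finset.mul_sum, ← sub_eq_add_neg,
    ← Finset.sum_sub_distrib, Finset.sum_congr rfl fun x _ => term x, Finset.sum_add_distrib,
    ← Finset.sum_mul, hQ.2, one_mul]

end

theorem renyi_entropy_char_gt_one {X : Type*} [Fintype X] (P : X → ℝ) (hP : IsPMF P)
    (α : ℝ) (hα : 1 < α) :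
    IsLeast {v : EReal | ∃ Q : X → ℝ, IsPMF Q ∧
        v = ((α / (α - 1) : ℝ) : EReal) * klDiv Q P + ((shannonEntropy Q : ℝ) : EReal)}
      ((renyiEntropy α P : ℝ) : EReal) := by
  have hα1 : 0 < α - 1 := sub_pos.mpr hα
  constructor
  · have hEP : ∀ x, 0 < escort α P x → 0 < P x := fun x =>
      (hP.escort_pos_iff (by positivity) x).mp
    refine ⟨escort α P, isPMF_escort hP α, ?_⟩
    rw [klDiv, if_pos hEP, ← EReal.coe_mul, ← EReal.coe_add,
      hP.klDiv_add_entropy_eq (isPMF_escort hP α) hEP hα.ne']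
    simp
  · rintro v ⟨Q, hQ, rfl⟩
    rw [klDiv]
    split_ifs with hQP
    · rw [← EReal.coe_mul, ← EReal.coe_add, EReal.coe_le_coe_iff,
        hP.klDiv_add_entropy_eq hQ hQP hα.ne', le_add_iff_nonneg_right]
      have hQE : ∀ x, 0 < Q x → 0 < escort α P x := fun x hx =>
        (hP.escort_pos_iff (by positivity) x).mpr (hQP x hx)
      exact mul_nonneg (by positivity) (hQ.sum_mul_log_div_nonneg (isPMF_escort hP α) hQE)
    · rw [EReal.coe_mul_top_of_pos (div_pos (by linarith) hα1), EReal.top_add_coe]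
      exact le_top
end

section
/- For a probability distribution P on a finite alphabet X and any α with 0 < α < 1, the Rényi entropy satisfies H_α(P) = max over all probability distributions Q on X of [ (α/(α−1))·D(Q‖P) + H(Q) ]. -/
open scoped Classical BigOperators

theorem renyi_entropy_char_lt_one {X : Type*} [Fintype X] (P : X → ℝ) (hP : IsPMF P)
    (α : ℝ) (hα0 : 0 < α) (hα1 : α < 1) :
    IsGreatest {v : EReal | ∃ Q : X → ℝ, IsPMF Q ∧
        v = ((α / (α - 1) : ℝ) : EReal) * klDiv Q P + ((shannonEntropy Q : ℝ) : EReal)}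
      ((renyiEntropy α P : ℝ) : EReal) := by
  obtain ⟨hP0, hP1⟩ := hP
  have hα1' : α - 1 ≠ 0 := by linarith
  have h1α : (0:ℝ) < 1 - α := by linarith
  set Z : ℝ := ∑ x, P x ^ α with hZdef
  have hfnn : ∀ x : X, 0 ≤ P x ^ α := fun x => Real.rpow_nonneg (hP0 x) α
  have hZpos : 0 < Z := by
    obtain ⟨x, hx⟩ : ∃ x, 0 < P x := by
      by_contra h
      push_neg at h
      have : ∑ x, P x = 0 :=
        Finset.sum_eq_zero fun x _ => le_antisymm (h x) (hP0 x)
      rw [this] at hP1; norm_num at hP1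
    exact Finset.sum_pos' (fun y _ => hfnn y)
      ⟨x, Finset.mem_univ x, Real.rpow_pos_of_pos hx α⟩
  set t : ℝ := 1 / (1 - α) with htdef
  have htpos : 0 < t := by positivity
  set c : ℝ := α / (α - 1) with hcdef
  have hren : renyiEntropy α P = t * Real.log Z := rfl
  -- the key real inequality / equality machinery
  have key : ∀ Q : X → ℝ, (∀ x, 0 ≤ Q x) → (∑ x, Q x = 1) →
      (∀ x, 0 < Q x → 0 < P x) →
      c * (∑ x, Q x * Real.log (Q x / P x)) + (-∑ x, Q x * Real.log (Q x))
        = t * ∑ x, Q x * Real.log (P x ^ α / Q x) := by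
    intro Q hQ0 hQ1 hQP
    have hterm : ∀ x : X, c * (Q x * Real.log (Q x / P x)) + -(Q x * Real.log (Q x))
        = t * (Q x * Real.log (P x ^ α / Q x)) := by
      intro x
      rcases eq_or_lt_of_le (hQ0 x) with h | h
      · simp [← h]
      · have hpx : 0 < P x := hQP x h
        have hq : Q x ≠ 0 := ne_of_gt h
        rw [Real.log_div hq (ne_of_gt hpx),
          Real.log_div (ne_of_gt (Real.rpow_pos_of_pos hpx α)) hq,
          Real.log_rpow hpx, htdef, hcdef]
        field_simp
        ring
    calc c * (∑ x, Q x * Real.log (Q x / P x)) + (-∑ x, Q x * Real.log (Q x))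
        = ∑ x, (c * (Q x * Real.log (Q x / P x)) + -(Q x * Real.log (Q x))) := by
          rw [Finset.sum_add_distrib, ← Finset.mul_sum, Finset.sum_neg_distrib]
      _ = ∑ x, t * (Q x * Real.log (P x ^ α / Q x)) :=
          Finset.sum_congr rfl fun x _ => hterm x
      _ = t * ∑ x, Q x * Real.log (P x ^ α / Q x) := by rw [Finset.mul_sum]
  have sumbound : ∀ Q : X → ℝ, (∀ x, 0 ≤ Q x) → (∑ x, Q x = 1) →
      (∀ x, 0 < Q x → 0 < P x) →
      (∑ x, Q x * Real.log (P x ^ α / Q x)) ≤ Real.log Z := by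
    intro Q hQ0 hQ1 hQP
    have hbd : ∀ x : X, Q x * Real.log (P x ^ α / Q x)
        ≤ P x ^ α / Z - Q x + Q x * Real.log Z := by
      intro x
      rcases eq_or_lt_of_le (hQ0 x) with h | h
      · rw [← h]
        simpa using div_nonneg (hfnn x) hZpos.le
      · have hpx : 0 < P x := hQP x h
        have hfx : 0 < P x ^ α := Real.rpow_pos_of_pos hpx α
        have harg : 0 < P x ^ α / (Q x * Z) := by positivity
        have hlog := Real.log_le_sub_one_of_pos harg
        have hsplit : Real.log (P x ^ α / Q x)
            = Real.log (P x ^ α / (Q x * Z)) + Real.log Z := by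
          rw [← Real.log_mul (ne_of_gt harg) (ne_of_gt hZpos)]
          congr 1
          field_simp
        rw [hsplit]
        have := mul_le_mul_of_nonneg_left hlog (le_of_lt h)
        have hx2 : Q x * (P x ^ α / (Q x * Z)) = P x ^ α / Z := by
          field_simp
        nlinarith [hx2]
    calc (∑ x, Q x * Real.log (P x ^ α / Q x))
        ≤ ∑ x, (P x ^ α / Z - Q x + Q x * Real.log Z) :=
          Finset.sum_le_sum fun x _ => hbd x
      _ = (∑ x, P x ^ α) / Z - (∑ x, Q x) + (∑ x, Q x) * Real.log Z := by
          rw [Finset.sum_add_distrib, Finset.sum_sub_distrib, ← Finset.sum_div,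
            ← Finset.sum_mul]
      _ = Real.log Z := by
          rw [hQ1, ← hZdef, div_self (ne_of_gt hZpos)]; ring
  constructor
  · -- membership: take Q = fun x => P x ^ α / Z
    refine ⟨fun x => P x ^ α / Z, ⟨fun x => div_nonneg (hfnn x) hZpos.le, ?_⟩, ?_⟩
    · rw [← Finset.sum_div, ← hZdef, div_self (ne_of_gt hZpos)]
    · have hQP : ∀ x, 0 < P x ^ α / Z → 0 < P x := by
        intro x hx
        rcases eq_or_lt_of_le (hP0 x) with h | h
        · rw [← h, Real.zero_rpow (ne_of_gt hα0)] at hx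
          simp at hx
        · exact h
      have hQ0 : ∀ x, 0 ≤ P x ^ α / Z := fun x => div_nonneg (hfnn x) hZpos.le
      have hQ1 : ∑ x, P x ^ α / Z = 1 := by
        rw [← Finset.sum_div, ← hZdef, div_self (ne_of_gt hZpos)]
      rw [klDiv, if_pos hQP, shannonEntropy, ← EReal.coe_mul, ← EReal.coe_add,
        EReal.coe_eq_coe_iff, hren]
      rw [key _ hQ0 hQ1 hQP]
      congr 1
      have : ∀ x : X, (P x ^ α / Z) * Real.log (P x ^ α / (P x ^ α / Z))
          = (P x ^ α / Z) * Real.log Z := by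
        intro x
        rcases eq_or_lt_of_le (hfnn x) with h | h
        · rw [← h]; simp
        · have hne : P x ^ α ≠ 0 := ne_of_gt h
          congr 1
          field_simp
      calc Real.log Z = (∑ x, P x ^ α / Z) * Real.log Z := by rw [hQ1, one_mul]
        _ = ∑ x, (P x ^ α / Z) * Real.log (P x ^ α / (P x ^ α / Z)) := by
            rw [Finset.sum_mul]
            exact (Finset.sum_congr rfl fun x _ => this x).symm
  · -- upper bound
    rintro v ⟨Q, ⟨hQ0, hQ1⟩, rfl⟩
    by_cases hQP : ∀ x, 0 < Q x → 0 < P x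
    · rw [klDiv, if_pos hQP, shannonEntropy, ← EReal.coe_mul, ← EReal.coe_add,
        EReal.coe_le_coe_iff, hren]
      rw [key Q hQ0 hQ1 hQP]
      exact mul_le_mul_of_nonneg_left (sumbound Q hQ0 hQ1 hQP) (le_of_lt htpos)
    · rw [klDiv, if_neg hQP]
      have hc : c < 0 := div_neg_of_pos_of_neg hα0 (by linarith)
      rw [EReal.coe_mul_top_of_neg hc, EReal.bot_add]
      exact bot_le
end

section
/- For probability distributions P1, P2 on a finite alphabet X with P1 absolutely continuous with respect to P2, and any α > 1, the Rényi divergence satisfies D_α(P1‖P2) = max over all probability distributions Q with support contained in the support of P1 of [ (α/(1−α))·D(Q‖P1) + D(Q‖P2) ]. -/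
open scoped Classical BigOperators

theorem renyi_div_char_gt_one {X : Type*} [Fintype X] (P1 P2 : X → ℝ)
    (hP1 : IsPMF P1) (hP2 : IsPMF P2) (hac : ∀ x, 0 < P1 x → 0 < P2 x)
    (α : ℝ) (hα : 1 < α) :
    IsGreatest {v : EReal | ∃ Q : X → ℝ, IsPMF Q ∧ (∀ x, 0 < Q x → 0 < P1 x) ∧
        v = ((α / (1 - α) : ℝ) : EReal) * klDiv Q P1 + klDiv Q P2}
      (renyiDiv α P1 P2) := by
  classical
  obtain ⟨hP1n, hP1s⟩ := hP1
  obtain ⟨hP2n, hP2s⟩ := hP2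
  have hα1 : (0:ℝ) < α - 1 := by linarith
  have hα1' : (1:ℝ) - α ≠ 0 := by linarith
  set r : X → ℝ := fun x => if 0 < P1 x ∧ 0 < P2 x then P1 x ^ α * P2 x ^ (1 - α) else 0
    with hrdef
  have hrnn : ∀ x, 0 ≤ r x := by
    intro x
    simp only [hrdef]
    split
    · rename_i h
      exact le_of_lt (mul_pos (Real.rpow_pos_of_pos h.1 α) (Real.rpow_pos_of_pos h.2 _))
    · exact le_refl 0
  have hrpos : ∀ x, 0 < P1 x → 0 < r x := by
    intro x hx
    have hx2 := hac x hx
    simp only [hrdef]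
    rw [if_pos (show 0 < P1 x ∧ 0 < P2 x from ⟨hx, hx2⟩)]
    exact mul_pos (Real.rpow_pos_of_pos hx α) (Real.rpow_pos_of_pos hx2 _)
  have hrlog : ∀ x, 0 < P1 x → Real.log (r x) =
      α * Real.log (P1 x) + (1 - α) * Real.log (P2 x) := by
    intro x hx
    have hx2 := hac x hx
    simp only [hrdef]
    rw [if_pos (show 0 < P1 x ∧ 0 < P2 x from ⟨hx, hx2⟩), Real.log_mul (ne_of_gt (Real.rpow_pos_of_pos hx α))
      (ne_of_gt (Real.rpow_pos_of_pos hx2 _)), Real.log_rpow hx, Real.log_rpow hx2]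
  set Z : ℝ := ∑ x, r x with hZdef
  obtain ⟨x0, _, hx0⟩ : ∃ x ∈ Finset.univ, P1 x ≠ 0 := by
    apply Finset.exists_ne_zero_of_sum_ne_zero
    rw [hP1s]; norm_num
  have hx0 : 0 < P1 x0 := lt_of_le_of_ne (hP1n x0) (Ne.symm hx0)
  have hZpos : 0 < Z :=
    Finset.sum_pos' (fun x _ => hrnn x) ⟨x0, Finset.mem_univ _, hrpos x0 hx0⟩
  -- value of renyiDiv
  have hrd : renyiDiv α P1 P2 = (((1/(α-1)) * Real.log Z : ℝ) : EReal) := by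
    rw [renyiDiv, if_neg, if_neg]
    · intro h
      exact absurd ⟨hx0, hac x0 hx0⟩ (h x0)
    · rintro ⟨-, h⟩
      exact h hac
  -- KL divergences are finite
  have hkl : ∀ Q : X → ℝ, (∀ x, 0 < Q x → 0 < P1 x) →
      ((α / (1 - α) : ℝ) : EReal) * klDiv Q P1 + klDiv Q P2 =
      (((α / (1-α)) * (∑ x, Q x * Real.log (Q x / P1 x))
        + (∑ x, Q x * Real.log (Q x / P2 x)) : ℝ) : EReal) := by
    intro Q hQ
    rw [klDiv, klDiv, if_pos hQ, if_pos (fun x hx => hac x (hQ x hx))]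
    rw [← EReal.coe_mul, ← EReal.coe_add]
  constructor
  · -- membership: witness Q* = r / Z
    refine ⟨fun x => r x / Z, ⟨fun x => div_nonneg (hrnn x) hZpos.le, ?_⟩, ?_, ?_⟩
    · rw [← Finset.sum_div, ← hZdef, div_self (ne_of_gt hZpos)]
    · intro x hx
      by_contra h
      have : r x = 0 := by
        simp only [hrdef]
        rw [if_neg]
        rintro ⟨h1, -⟩; exact h h1
      have hx' : 0 < r x / Z := hx
      rw [this] at hx'
      simp at hx'
    · rw [hrd, hkl _ ?ac]
      case ac =>
        intro x hx
        by_contra h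
        have : r x = 0 := by
          simp only [hrdef]
          rw [if_neg]
          rintro ⟨h1, -⟩; exact h h1
        have hx' : 0 < r x / Z := hx
        rw [this] at hx'
        simp at hx'
      rw [EReal.coe_eq_coe_iff]
      beta_reduce
      rw [Finset.mul_sum, ← Finset.sum_add_distrib]
      have : ∀ x ∈ Finset.univ, α / (1 - α) * (r x / Z * Real.log (r x / Z / P1 x))
          + r x / Z * Real.log (r x / Z / P2 x)
          = (r x / Z) * ((1/(α-1)) * Real.log Z) := by
        intro x _
        rcases eq_or_lt_of_le (hrnn x) with h0 | hpos
        · rw [← h0]; simp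
        · have hp1 : 0 < P1 x := by
            by_contra h
            have : r x = 0 := by
              simp only [hrdef]
              rw [if_neg]
              rintro ⟨h1, -⟩; exact h h1
            rw [← this] at hpos; exact lt_irrefl _ hpos
          have hp2 : 0 < P2 x := hac x hp1
          have hq : 0 < r x / Z := div_pos hpos hZpos
          rw [Real.log_div (ne_of_gt hq) (ne_of_gt hp1),
            Real.log_div (ne_of_gt hq) (ne_of_gt hp2),
            Real.log_div (ne_of_gt hpos) (ne_of_gt hZpos), hrlog x hp1]
          field_simp
          ring
      rw [Finset.sum_congr rfl this, ← Finset.sum_mul,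
        show (∑ x, r x / Z) = Z / Z from (Finset.sum_div _ _ _).symm,
        div_self (ne_of_gt hZpos), one_mul]
  · -- upper bound
    rintro v ⟨Q, ⟨hQn, hQs⟩, hQac, rfl⟩
    rw [hrd, hkl Q hQac, EReal.coe_le_coe_iff]
    set A := ∑ x, Q x * Real.log (Q x / P1 x) with hA
    set B := ∑ x, Q x * Real.log (Q x / P2 x) with hB
    have key : -α * A + (α - 1) * B ≤ Real.log Z := by
      have hterm : ∀ x ∈ Finset.univ,
          (-α) * (Q x * Real.log (Q x / P1 x)) + (α - 1) * (Q x * Real.log (Q x / P2 x))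
          ≤ r x / Z - Q x + Q x * Real.log Z := by
        intro x _
        rcases eq_or_lt_of_le (hQn x) with h0 | hq
        · rw [← h0]
          simp
          exact div_nonneg (hrnn x) hZpos.le
        · have hp1 : 0 < P1 x := hQac x hq
          have hp2 : 0 < P2 x := hac x hp1
          have hrp : 0 < r x := hrpos x hp1
          have h1 : Real.log (r x / (Q x * Z)) ≤ r x / (Q x * Z) - 1 :=
            Real.log_le_sub_one_of_pos (div_pos hrp (mul_pos hq hZpos))
          have h2 : Real.log (r x / (Q x * Z)) =
              Real.log (r x) - Real.log (Q x) - Real.log Z := by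
            rw [Real.log_div (ne_of_gt hrp) (ne_of_gt (mul_pos hq hZpos)),
              Real.log_mul (ne_of_gt hq) (ne_of_gt hZpos)]
            ring
          rw [h2] at h1
          rw [Real.log_div (ne_of_gt hq) (ne_of_gt hp1),
            Real.log_div (ne_of_gt hq) (ne_of_gt hp2)]
          have h3 : (-α) * (Q x * (Real.log (Q x) - Real.log (P1 x)))
              + (α - 1) * (Q x * (Real.log (Q x) - Real.log (P2 x)))
              = Q x * (Real.log (r x) - Real.log (Q x) - Real.log Z) + Q x * Real.log Z := by
            rw [hrlog x hp1]; ring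
          rw [h3]
          have h4 : Q x * (Real.log (r x) - Real.log (Q x) - Real.log Z)
              ≤ Q x * (r x / (Q x * Z) - 1) := by
            exact mul_le_mul_of_nonneg_left h1 hq.le
          have h5 : Q x * (r x / (Q x * Z) - 1) = r x / Z - Q x := by
            field_simp
          linarith
      have hsum := Finset.sum_le_sum hterm
      have hlhs : ∑ x, ((-α) * (Q x * Real.log (Q x / P1 x))
          + (α - 1) * (Q x * Real.log (Q x / P2 x))) = -α * A + (α - 1) * B := by
        rw [Finset.sum_add_distrib, ← Finset.mul_sum, ← Finset.mul_sum, hA, hB]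
      have hrhs : ∑ x, (r x / Z - Q x + Q x * Real.log Z) = Real.log Z := by
        rw [Finset.sum_add_distrib, Finset.sum_sub_distrib, ← Finset.sum_div, ← hZdef,
          div_self (ne_of_gt hZpos), hQs, ← Finset.sum_mul, hQs, one_mul]
        ring
      rw [hlhs, hrhs] at hsum
      exact hsum
    have heq : α / (1 - α) * A + B = (-α * A + (α - 1) * B) / (α - 1) := by
      field_simp
      ring
    have heq2 : (1/(α-1)) * Real.log Z = Real.log Z / (α-1) := by ring
    rw [heq, heq2]
    exact (div_le_div_iff_of_pos_right hα1).mpr key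
end

section
/- For any α > 0 and β ∈ ℝ, and probability distributions P1, P2 on a finite alphabet X, the functional J_{α,β}(P1,P2) := −log ∑_{x ∈ S(P1)} P1(x)^α P2(x)^β satisfies J_{α,β}(P1,P2) = min over probability distributions Q with support contained in S(P1) of [ α·D(Q‖P1) + β·D(Q‖P2) + (α+β−1)·H(Q) ], with values in the extended reals. -/
open scoped Classical BigOperators

/-- The functional `J_{α,β}(P1,P2) = -log ∑_{x ∈ S(P1)} P1(x)^α P2(x)^β`, with the conventions
that a term `a^α · 0^β` with `a > 0` and `β < 0` equals `+∞` (so the whole sum is `+∞` and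
`J = -∞`), `0^0 = 1`, and `-log 0 = +∞`. -/
noncomputable def Jfun {X : Type*} [Fintype X] (α β : ℝ) (P1 P2 : X → ℝ) : EReal :=
  if β < 0 ∧ ∃ x, 0 < P1 x ∧ P2 x = 0 then ⊥
  else if 0 < β ∧ ∀ x, 0 < P1 x → P2 x = 0 then ⊤
  else ((-(Real.log (∑ x, if 0 < P1 x then P1 x ^ α * P2 x ^ β else 0)) : ℝ) : EReal)

section auxJ
variable {X : Type*} [Fintype X]

lemma exists_pos_of_sum_one (Q : X → ℝ) (hQ0 : ∀ x, 0 ≤ Q x) (hQ1 : ∑ x, Q x = 1) :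
    ∃ x, 0 < Q x := by
  by_contra h
  push_neg at h
  have : ∑ x, Q x = 0 := Finset.sum_eq_zero (fun x _ => le_antisymm (h x) (hQ0 x))
  rw [hQ1] at this
  norm_num at this

lemma gibbs_aux (Q w : X → ℝ) (hQ0 : ∀ x, 0 ≤ Q x) (hQ1 : ∑ x, Q x = 1)
    (hw0 : ∀ x, 0 ≤ w x) (hZ : 0 < ∑ x, w x)
    (hsupp : ∀ x, 0 < Q x → 0 < w x) :
    -Real.log (∑ x, w x) ≤ ∑ x, Q x * Real.log (Q x / w x) := by
  set Z := ∑ x, w x with hZdef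
  have hZne : Z ≠ 0 := ne_of_gt hZ
  have h1 : ∀ x, Q x * Real.log (w x / (Q x * Z)) ≤ w x / Z - Q x := by
    intro x
    rcases eq_or_lt_of_le (hQ0 x) with h | h
    · simp [← h]
      exact div_nonneg (hw0 x) (le_of_lt hZ)
    · have hw := hsupp x h
      have harg : 0 < w x / (Q x * Z) := by positivity
      calc Q x * Real.log (w x / (Q x * Z)) ≤ Q x * (w x / (Q x * Z) - 1) :=
            mul_le_mul_of_nonneg_left (Real.log_le_sub_one_of_pos harg) (le_of_lt h)
        _ = w x / Z - Q x := by field_simp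
  have h2 : ∀ x, Q x * Real.log (w x / (Q x * Z)) =
      -(Q x * Real.log (Q x / w x)) - Q x * Real.log Z := by
    intro x
    rcases eq_or_lt_of_le (hQ0 x) with h | h
    · simp [← h]
    · have hw := hsupp x h
      rw [Real.log_div (ne_of_gt hw) (by positivity), Real.log_div (ne_of_gt h) (ne_of_gt hw),
        Real.log_mul (ne_of_gt h) hZne]
      ring
  have hsum : ∑ x, Q x * Real.log (w x / (Q x * Z)) ≤ 0 := by
    calc ∑ x, Q x * Real.log (w x / (Q x * Z)) ≤ ∑ x, (w x / Z - Q x) :=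
          Finset.sum_le_sum (fun x _ => h1 x)
      _ = (∑ x, w x) / Z - ∑ x, Q x := by rw [Finset.sum_sub_distrib, Finset.sum_div]
      _ = 0 := by rw [hQ1, ← hZdef, div_self hZne]; ring
  have heq : ∑ x, Q x * Real.log (w x / (Q x * Z)) =
      -(∑ x, Q x * Real.log (Q x / w x)) - Real.log Z := by
    calc ∑ x, Q x * Real.log (w x / (Q x * Z))
        = ∑ x, (-(Q x * Real.log (Q x / w x)) - Q x * Real.log Z) :=
          Finset.sum_congr rfl (fun x _ => h2 x)
      _ = -(∑ x, Q x * Real.log (Q x / w x)) - (∑ x, Q x) * Real.log Z := by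
          rw [Finset.sum_sub_distrib, Finset.sum_neg_distrib, Finset.sum_mul]
      _ = -(∑ x, Q x * Real.log (Q x / w x)) - Real.log Z := by rw [hQ1, one_mul]
  rw [heq] at hsum
  linarith

lemma real_identity (P1 P2 Q w : X → ℝ) (α β : ℝ) (hQ0 : ∀ x, 0 ≤ Q x)
    (h1 : ∀ x, 0 < Q x → 0 < P1 x) (h2 : ∀ x, 0 < Q x → 0 < P2 x ∨ β = 0)
    (hw : ∀ x, 0 < P1 x → w x = P1 x ^ α * P2 x ^ β) :
    α * (∑ x, Q x * Real.log (Q x / P1 x)) + β * (∑ x, Q x * Real.log (Q x / P2 x))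
      + (α + β - 1) * (-∑ x, Q x * Real.log (Q x))
    = ∑ x, Q x * Real.log (Q x / w x) := by
  rw [Finset.mul_sum, Finset.mul_sum, ← Finset.sum_neg_distrib, Finset.mul_sum,
    ← Finset.sum_add_distrib, ← Finset.sum_add_distrib]
  refine Finset.sum_congr rfl (fun x _ => ?_)
  rcases eq_or_lt_of_le (hQ0 x) with h | h
  · simp [← h]
  · have hP1 := h1 x h
    rw [hw x hP1]
    rcases h2 x h with hP2 | hβ0
    · rw [Real.log_div (ne_of_gt h) (ne_of_gt hP1),
        Real.log_div (ne_of_gt h) (ne_of_gt hP2),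
        Real.log_div (ne_of_gt h)
          (ne_of_gt (mul_pos (Real.rpow_pos_of_pos hP1 α) (Real.rpow_pos_of_pos hP2 β))),
        Real.log_mul (ne_of_gt (Real.rpow_pos_of_pos hP1 α))
          (ne_of_gt (Real.rpow_pos_of_pos hP2 β)),
        Real.log_rpow hP1, Real.log_rpow hP2]
      ring
    · subst hβ0
      rw [Real.rpow_zero, mul_one,
        Real.log_div (ne_of_gt h) (ne_of_gt hP1),
        Real.log_div (ne_of_gt h) (ne_of_gt (Real.rpow_pos_of_pos hP1 α)),
        Real.log_rpow hP1]
      ring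

end auxJ

theorem Jfun_char {X : Type*} [Fintype X] (P1 P2 : X → ℝ)
    (hP1 : IsPMF P1) (hP2 : IsPMF P2) (α β : ℝ) (hα : 0 < α) :
    IsLeast {v : EReal | ∃ Q : X → ℝ, IsPMF Q ∧ (∀ x, 0 < Q x → 0 < P1 x) ∧
        v = ((α : ℝ) : EReal) * klDiv Q P1 + ((β : ℝ) : EReal) * klDiv Q P2 +
            ((α + β - 1 : ℝ) : EReal) * ((shannonEntropy Q : ℝ) : EReal)}
      (Jfun α β P1 P2) := by
  obtain ⟨hP1nn, hP1sum⟩ := hP1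
  obtain ⟨hP2nn, hP2sum⟩ := hP2
  obtain ⟨x1, hx1⟩ := exists_pos_of_sum_one P1 hP1nn hP1sum
  by_cases hc1 : β < 0 ∧ ∃ x, 0 < P1 x ∧ P2 x = 0
  · -- Jfun = ⊥
    obtain ⟨hβ, x0, hx0P1, hx0P2⟩ := hc1
    rw [Jfun, if_pos ⟨hβ, x0, hx0P1, hx0P2⟩]
    constructor
    · refine ⟨fun y => if y = x0 then 1 else 0, ⟨fun y => by by_cases h : y = x0 <;> simp [h], by simp⟩,
        fun y hy => ?_, ?_⟩
      · by_cases h : y = x0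
        · rw [h]; exact hx0P1
        · simp [h] at hy
      · have hKL1 : klDiv (fun y => if y = x0 then (1:ℝ) else 0) P1 =
            ((∑ y, (if y = x0 then (1:ℝ) else 0) * Real.log ((if y = x0 then (1:ℝ) else 0) / P1 y) : ℝ) : EReal) := by
          rw [klDiv, if_pos]
          intro y hy
          by_cases h : y = x0
          · rw [h]; exact hx0P1
          · simp [h] at hy
        have hKL2 : klDiv (fun y => if y = x0 then (1:ℝ) else 0) P2 = ⊤ := by
          rw [klDiv, if_neg]
          push_neg
          exact ⟨x0, by simp, by rw [hx0P2]⟩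
        rw [hKL1, hKL2, EReal.mul_top_of_neg (EReal.coe_neg'.2 hβ), ← EReal.coe_mul,
          ← EReal.coe_mul, EReal.add_bot, EReal.bot_add]
    · intro v _
      exact bot_le
  · by_cases hc2 : 0 < β ∧ ∀ x, 0 < P1 x → P2 x = 0
    · -- Jfun = ⊤
      obtain ⟨hβ, hdead⟩ := hc2
      rw [Jfun, if_neg hc1, if_pos ⟨hβ, hdead⟩]
      have hKL2top : ∀ Q : X → ℝ, IsPMF Q → (∀ x, 0 < Q x → 0 < P1 x) → klDiv Q P2 = ⊤ := by
        intro Q ⟨hQnn, hQsum⟩ hsupp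
        obtain ⟨x0, hx0⟩ := exists_pos_of_sum_one Q hQnn hQsum
        rw [klDiv, if_neg]
        push_neg
        exact ⟨x0, hx0, by rw [hdead x0 (hsupp x0 hx0)]⟩
      have hval : ∀ Q : X → ℝ, IsPMF Q → (∀ x, 0 < Q x → 0 < P1 x) →
          ((α : ℝ) : EReal) * klDiv Q P1 + ((β : ℝ) : EReal) * klDiv Q P2 +
            ((α + β - 1 : ℝ) : EReal) * ((shannonEntropy Q : ℝ) : EReal) = ⊤ := by
        intro Q hQ hsupp
        rw [hKL2top Q hQ hsupp, klDiv, if_pos hsupp, ← EReal.coe_mul,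
          EReal.mul_top_of_pos (EReal.coe_pos.2 hβ), EReal.coe_add_top, ← EReal.coe_mul,
          EReal.top_add_coe]
      constructor
      · exact ⟨P1, ⟨hP1nn, hP1sum⟩, fun x hx => hx, (hval P1 ⟨hP1nn, hP1sum⟩ (fun x hx => hx)).symm⟩
      · rintro v ⟨Q, hQ, hsupp, rfl⟩
        exact le_of_eq (hval Q hQ hsupp).symm
    · -- finite case
      rw [Jfun, if_neg hc1, if_neg hc2]
      push_neg at hc1 hc2
      set w : X → ℝ := fun x => if 0 < P1 x then P1 x ^ α * P2 x ^ β else 0 with hwdef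
      have hw0 : ∀ x, 0 ≤ w x := by
        intro x
        rw [hwdef]
        dsimp only
        split
        · exact mul_nonneg (Real.rpow_nonneg (hP1nn x) α) (Real.rpow_nonneg (hP2nn x) β)
        · exact le_refl 0
      have hwpos : ∀ x, 0 < P1 x → (0 < P2 x ∨ β = 0) → 0 < w x := by
        intro x h1 h2
        rw [hwdef]
        dsimp only
        rw [if_pos h1]
        rcases h2 with h2 | h2
        · exact mul_pos (Real.rpow_pos_of_pos h1 α) (Real.rpow_pos_of_pos h2 β)
        · rw [h2, Real.rpow_zero, mul_one]
          exact Real.rpow_pos_of_pos h1 α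
      have hZpos : 0 < ∑ x, w x := by
        have hx : ∃ x, 0 < w x := by
          rcases lt_trichotomy β 0 with hβ | hβ | hβ
          · exact ⟨x1, hwpos x1 hx1
              (Or.inl (lt_of_le_of_ne (hP2nn x1) (Ne.symm (hc1 hβ x1 hx1))))⟩
          · exact ⟨x1, hwpos x1 hx1 (Or.inr hβ)⟩
          · obtain ⟨x2, hx2, hP2x2⟩ := hc2 hβ
            exact ⟨x2, hwpos x2 hx2 (Or.inl (lt_of_le_of_ne (hP2nn x2) (Ne.symm hP2x2)))⟩
        obtain ⟨x0, hx0⟩ := hx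
        exact Finset.sum_pos' (fun x _ => hw0 x) ⟨x0, Finset.mem_univ x0, hx0⟩
      have hweq : ∀ x, 0 < P1 x → w x = P1 x ^ α * P2 x ^ β := by
        intro x h
        rw [hwdef]
        dsimp only
        rw [if_pos h]
      set Z := ∑ x, w x with hZdef
      have hZne : Z ≠ 0 := ne_of_gt hZpos
      constructor
      · -- membership: Q = w / Z
        set Q : X → ℝ := fun x => w x / Z with hQdef
        have hQnn : ∀ x, 0 ≤ Q x := fun x => div_nonneg (hw0 x) (le_of_lt hZpos)
        have hQsum : ∑ x, Q x = 1 := by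
          rw [hQdef]
          dsimp only
          rw [← Finset.sum_div, ← hZdef, div_self hZne]
        have hQw : ∀ x, 0 < Q x → 0 < w x := by
          intro x hx
          by_contra h
          push_neg at h
          have : w x = 0 := le_antisymm h (hw0 x)
          rw [hQdef] at hx
          dsimp only at hx
          rw [this, zero_div] at hx
          exact lt_irrefl 0 hx
        have hQP1 : ∀ x, 0 < Q x → 0 < P1 x := by
          intro x hx
          by_contra h
          have : w x = 0 := by rw [hwdef]; dsimp only; rw [if_neg h]
          exact absurd this (ne_of_gt (hQw x hx))
        have hQP2 : ∀ x, 0 < Q x → 0 < P2 x ∨ β = 0 := by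
          intro x hx
          by_cases hβ : β = 0
          · exact Or.inr hβ
          · left
            have hwx := hQw x hx
            rw [hwdef] at hwx
            dsimp only at hwx
            rw [if_pos (hQP1 x hx)] at hwx
            by_contra h
            have hP2x : P2 x = 0 := le_antisymm (not_lt.1 h) (hP2nn x)
            rw [hP2x, Real.zero_rpow hβ, mul_zero] at hwx
            exact lt_irrefl 0 hwx
        have hid := real_identity P1 P2 Q w α β hQnn hQP1 hQP2 hweq
        have hsum_opt : ∑ x, Q x * Real.log (Q x / w x) = -Real.log Z := by
          have : ∀ x, Q x * Real.log (Q x / w x) = Q x * (-Real.log Z) := by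
            intro x
            rcases eq_or_lt_of_le (hQnn x) with h | h
            · rw [← h, zero_mul, zero_mul]
            · have hwx := hQw x h
              have : Q x / w x = Z⁻¹ := by
                rw [hQdef]
                dsimp only
                rw [div_div, mul_comm, ← div_div, div_self (ne_of_gt hwx), one_div]
              rw [this, Real.log_inv]
          rw [Finset.sum_congr rfl (fun x _ => this x), ← Finset.sum_mul, hQsum, one_mul]
        refine ⟨Q, ⟨hQnn, hQsum⟩, hQP1, ?_⟩
        have hKL1 : klDiv Q P1 = ((∑ x, Q x * Real.log (Q x / P1 x) : ℝ) : EReal) := by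
          rw [klDiv, if_pos hQP1]
        have hKL2 : ((β : ℝ) : EReal) * klDiv Q P2 =
            ((β * ∑ x, Q x * Real.log (Q x / P2 x) : ℝ) : EReal) := by
          by_cases hβ : β = 0
          · subst hβ
            simp
          · have : ∀ x, 0 < Q x → 0 < P2 x := fun x hx => (hQP2 x hx).resolve_right hβ
            rw [klDiv, if_pos this, ← EReal.coe_mul]
        rw [hKL1, hKL2, ← EReal.coe_mul, ← EReal.coe_mul, ← EReal.coe_add, ← EReal.coe_add,
          EReal.coe_eq_coe_iff, shannonEntropy, hid]
        exact hsum_opt.symm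
      · -- lower bound
        rintro v ⟨Q, ⟨hQnn, hQsum⟩, hQP1, rfl⟩
        have hKL1 : klDiv Q P1 = ((∑ x, Q x * Real.log (Q x / P1 x) : ℝ) : EReal) := by
          rw [klDiv, if_pos hQP1]
        by_cases hcase : ∀ x, 0 < Q x → 0 < P2 x ∨ β = 0
        · have hQw : ∀ x, 0 < Q x → 0 < w x :=
            fun x hx => hwpos x (hQP1 x hx) (hcase x hx)
          have hid := real_identity P1 P2 Q w α β hQnn hQP1 hcase hweq
          have hgibbs := gibbs_aux Q w hQnn hQsum hw0 hZpos hQw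
          have hKL2 : ((β : ℝ) : EReal) * klDiv Q P2 =
              ((β * ∑ x, Q x * Real.log (Q x / P2 x) : ℝ) : EReal) := by
            by_cases hβ : β = 0
            · subst hβ
              simp
            · have : ∀ x, 0 < Q x → 0 < P2 x := fun x hx => (hcase x hx).resolve_right hβ
              rw [klDiv, if_pos this, ← EReal.coe_mul]
          rw [hKL1, hKL2, ← EReal.coe_mul, ← EReal.coe_mul, ← EReal.coe_add, ← EReal.coe_add]
          rw [EReal.coe_le_coe_iff, shannonEntropy, hid]
          exact hgibbs
        · push_neg at hcase
          obtain ⟨x0, hQx0, hP2x0, hβne⟩ := hcase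
          have hβpos : 0 < β := by
            rcases lt_trichotomy β 0 with hβ | hβ | hβ
            · exact absurd (le_antisymm hP2x0 (hP2nn x0)) (hc1 hβ x0 (hQP1 x0 hQx0))
            · exact absurd hβ hβne
            · exact hβ
          have hKL2 : klDiv Q P2 = ⊤ := by
            rw [klDiv, if_neg]
            push_neg
            exact ⟨x0, hQx0, hP2x0⟩
          rw [hKL1, hKL2, EReal.mul_top_of_pos (EReal.coe_pos.2 hβpos), ← EReal.coe_mul,
            EReal.coe_add_top, ← EReal.coe_mul, EReal.top_add_coe]
          exact le_top
end

section
/- For 0 < α < 1, the Rényi divergence D_α(P1‖P2) is jointly convex in the pair (P1, P2); for α > 1, D_α(P1‖P2) is convex in P2 for each fixed P1. -/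
/-
Away from the cases where it is `⊤`, `D_α(P‖Q) = (α - 1)⁻¹ log F_α(P, Q)` with
`F_α(P, Q) = ∑ P^α Q^(1-α)`. Each term of `F_α` is a weighted geometric mean, so Hölder's
inequality drives both halves. For `0 < α < 1`, `F_α` is jointly concave, hence so is `log F_α`,
and the factor `(α - 1)⁻¹` is negative. For `α > 1`, `q ↦ q^(1-α)` is log-convex, and Hölder
upgrades this pointwise log-convexity to log-convexity of `Q ↦ F_α(P, Q)`.
-/

open scoped Classical BigOperators

open Real

namespace Real

theorem mul_rpow_mul_rpow_one_sub {θ c a b : ℝ} (hc : 0 ≤ c) (ha : 0 ≤ a) (hb : 0 ≤ b) :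
    (c * a) ^ θ * (c * b) ^ (1 - θ) = c * (a ^ θ * b ^ (1 - θ)) := by
  rw [mul_rpow hc ha, mul_rpow hc hb]
  calc c ^ θ * a ^ θ * (c ^ (1 - θ) * b ^ (1 - θ))
      = c ^ (θ + (1 - θ)) * (a ^ θ * b ^ (1 - θ)) := by
        rw [rpow_add' hc (by norm_num)]; ring
    _ = c * (a ^ θ * b ^ (1 - θ)) := by norm_num

theorem rpow_mul_rpow_one_sub_pos_iff {α p q : ℝ} (hα0 : α ≠ 0) (hα1 : α ≠ 1) (hp : 0 ≤ p)
    (hq : 0 ≤ q) : 0 < p ^ α * q ^ (1 - α) ↔ 0 < p ∧ 0 < q := by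
  refine ⟨fun h => ⟨hp.lt_of_ne ?_, hq.lt_of_ne ?_⟩, fun ⟨hp, hq⟩ => by positivity⟩
  · rintro rfl
    simp [zero_rpow hα0] at h
  · rintro rfl
    simp [zero_rpow (sub_ne_zero.2 hα1.symm)] at h

theorem sum_mul_rpow_mul_rpow_one_sub_le {ι : Type*} (s : Finset ι) {θ : ℝ} (hθ0 : 0 < θ)
    (hθ1 : θ < 1) {w f g : ι → ℝ} (hw : ∀ i ∈ s, 0 ≤ w i) (hf : ∀ i ∈ s, 0 ≤ f i)
    (hg : ∀ i ∈ s, 0 ≤ g i) :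
    ∑ i ∈ s, w i * (f i ^ θ * g i ^ (1 - θ)) ≤
      (∑ i ∈ s, w i * f i) ^ θ * (∑ i ∈ s, w i * g i) ^ (1 - θ) := by
  have hpq : HolderConjugate θ⁻¹ (1 - θ)⁻¹ := by
    rw [holderConjugate_iff, inv_inv, inv_inv]
    exact ⟨(one_lt_inv₀ hθ0).2 hθ1, by ring⟩
  have hwf : ∀ i ∈ s, 0 ≤ w i * f i := fun i hi => mul_nonneg (hw i hi) (hf i hi)
  have hwg : ∀ i ∈ s, 0 ≤ w i * g i := fun i hi => mul_nonneg (hw i hi) (hg i hi)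
  calc ∑ i ∈ s, w i * (f i ^ θ * g i ^ (1 - θ))
      = ∑ i ∈ s, (w i * f i) ^ θ * (w i * g i) ^ (1 - θ) :=
        Finset.sum_congr rfl fun i hi =>
          (mul_rpow_mul_rpow_one_sub (hw i hi) (hf i hi) (hg i hi)).symm
    _ ≤ (∑ i ∈ s, ((w i * f i) ^ θ) ^ θ⁻¹) ^ (1 / θ⁻¹) *
          (∑ i ∈ s, ((w i * g i) ^ (1 - θ)) ^ (1 - θ)⁻¹) ^ (1 / (1 - θ)⁻¹) :=
        inner_le_Lp_mul_Lq_of_nonneg s hpq (fun i hi => rpow_nonneg (hwf i hi) _)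
          (fun i hi => rpow_nonneg (hwg i hi) _)
    _ = (∑ i ∈ s, w i * f i) ^ θ * (∑ i ∈ s, w i * g i) ^ (1 - θ) := by
        rw [Finset.sum_congr rfl fun i hi => rpow_rpow_inv (hwf i hi) hθ0.ne',
          Finset.sum_congr rfl fun i hi => rpow_rpow_inv (hwg i hi) (sub_ne_zero.2 hθ1.ne'),
          one_div, one_div, inv_inv, inv_inv]

theorem rpow_mul_rpow_one_sub_concave {θ t a b c d : ℝ} (hθ0 : 0 < θ) (hθ1 : θ < 1)
    (ht0 : 0 ≤ t) (ht1 : t ≤ 1) (ha : 0 ≤ a) (hb : 0 ≤ b) (hc : 0 ≤ c) (hd : 0 ≤ d) :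
    t * (a ^ θ * b ^ (1 - θ)) + (1 - t) * (c ^ θ * d ^ (1 - θ)) ≤
      (t * a + (1 - t) * c) ^ θ * (t * b + (1 - t) * d) ^ (1 - θ) := by
  have ht1' : 0 ≤ 1 - t := sub_nonneg.2 ht1
  simpa [Fin.sum_univ_two] using sum_mul_rpow_mul_rpow_one_sub_le Finset.univ hθ0 hθ1
    (w := ![t, 1 - t]) (f := ![a, c]) (g := ![b, d])
    (by simp [Fin.forall_fin_two, ht0, ht1']) (by simp [Fin.forall_fin_two, ha, hc])
    (by simp [Fin.forall_fin_two, hb, hd])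

theorem mul_add_one_sub_mul_nonneg {t p q : ℝ} (ht0 : 0 ≤ t) (ht1 : t ≤ 1) (hp : 0 ≤ p)
    (hq : 0 ≤ q) : 0 ≤ t * p + (1 - t) * q :=
  add_nonneg (mul_nonneg ht0 hp) (mul_nonneg (sub_nonneg.2 ht1) hq)

theorem rpow_mix_le_rpow_mul_rpow_of_nonpos {β t p q : ℝ} (hβ : β ≤ 0) (ht0 : 0 ≤ t)
    (ht1 : t ≤ 1) (hp : 0 < p) (hq : 0 < q) :
    (t * p + (1 - t) * q) ^ β ≤ (p ^ β) ^ t * (q ^ β) ^ (1 - t) := by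
  have hgeom : 0 < p ^ t * q ^ (1 - t) := by positivity
  calc (t * p + (1 - t) * q) ^ β ≤ (p ^ t * q ^ (1 - t)) ^ β :=
        rpow_le_rpow_of_nonpos hgeom
          (geom_mean_le_arith_mean2_weighted ht0 (sub_nonneg.2 ht1) hp.le hq.le (by ring)) hβ
    _ = (p ^ β) ^ t * (q ^ β) ^ (1 - t) := by
        rw [mul_rpow (by positivity) (by positivity), ← rpow_mul hp.le, ← rpow_mul hq.le,
          ← rpow_mul hp.le, ← rpow_mul hq.le, mul_comm t, mul_comm (1 - t)]

end Real

namespace EReal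

theorem le_coe_mul_add_coe_mul_of_forall_coe {t : ℝ} (ht0 : 0 < t) (ht1 : t < 1)
    {a b c : EReal} (ha : a ≠ ⊥) (hb : b ≠ ⊥)
    (h : ∀ x y : ℝ, a = x → b = y → c ≤ ((t * x + (1 - t) * y : ℝ) : EReal)) :
    c ≤ (t : EReal) * a + ((1 - t : ℝ) : EReal) * b := by
  have ht1' : (0 : ℝ) < 1 - t := by linarith
  induction a using EReal.rec with
  | bot => exact absurd rfl ha
  | top =>
    rw [coe_mul_top_of_pos ht0, top_add_of_ne_bot]
    · exact le_top
    · induction b using EReal.rec with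
      | bot => exact absurd rfl hb
      | top => rw [coe_mul_top_of_pos ht1']; exact top_ne_bot
      | coe y => exact coe_ne_bot _
  | coe x =>
    induction b using EReal.rec with
    | bot => exact absurd rfl hb
    | top =>
      rw [coe_mul_top_of_pos ht1', ← coe_mul, add_top_of_ne_bot (coe_ne_bot _)]
      exact le_top
    | coe y => simpa only [← coe_mul, ← coe_add] using h x y rfl rfl

end EReal

section Renyi

variable {X : Type*} [Fintype X]

noncomputable def renyiSum (α : ℝ) (P Q : X → ℝ) : ℝ :=
  ∑ x, P x ^ α * Q x ^ (1 - α)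

theorem renyiSum_pos_iff {α : ℝ} (hα0 : α ≠ 0) (hα1 : α ≠ 1) {P Q : X → ℝ}
    (hP : ∀ x, 0 ≤ P x) (hQ : ∀ x, 0 ≤ Q x) :
    0 < renyiSum α P Q ↔ ∃ x, 0 < P x ∧ 0 < Q x := by
  rw [renyiSum, Finset.sum_pos_iff_of_nonneg fun x _ => by have := hP x; have := hQ x; positivity]
  simp only [Finset.mem_univ, true_and]
  exact exists_congr fun x => rpow_mul_rpow_one_sub_pos_iff hα0 hα1 (hP x) (hQ x)

-- `Real.rpow` has `0 ^ y = 0` for `y ≠ 0`, so the terms off the common support vanish.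
theorem sum_ite_pos_eq_renyiSum {α : ℝ} (hα0 : α ≠ 0) (hα1 : α ≠ 1) {P Q : X → ℝ}
    (hP : ∀ x, 0 ≤ P x) (hQ : ∀ x, 0 ≤ Q x) :
    (∑ x, if 0 < P x ∧ 0 < Q x then P x ^ α * Q x ^ (1 - α) else 0) = renyiSum α P Q := by
  refine Finset.sum_congr rfl fun x _ => ite_eq_left_iff.2 fun h => ?_
  rw [← rpow_mul_rpow_one_sub_pos_iff hα0 hα1 (hP x) (hQ x), not_lt] at h
  exact (h.antisymm (by have := hP x; have := hQ x; positivity)).symm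

theorem renyiDiv_eq_coe_iff {α : ℝ} (hα0 : α ≠ 0) (hα1 : α ≠ 1) {P Q : X → ℝ}
    (hP : ∀ x, 0 ≤ P x) (hQ : ∀ x, 0 ≤ Q x) {r : ℝ} :
    renyiDiv α P Q = r ↔ (1 < α → ∀ x, 0 < P x → 0 < Q x) ∧ 0 < renyiSum α P Q ∧
      1 / (α - 1) * log (renyiSum α P Q) = r := by
  rw [renyiDiv, sum_ite_pos_eq_renyiSum hα0 hα1 hP hQ, renyiSum_pos_iff hα0 hα1 hP hQ]
  split_ifs with h1 h2
  · simp_all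
  · simp_all
  · rw [EReal.coe_eq_coe_iff]
    push Not at h1 h2
    exact ⟨fun h => ⟨h1, h2, h⟩, fun h => h.2.2⟩

theorem renyiDiv_ne_bot (α : ℝ) (P Q : X → ℝ) : renyiDiv α P Q ≠ ⊥ := by
  unfold renyiDiv
  split_ifs <;> simp only [ne_eq, top_ne_bot, EReal.coe_ne_bot, not_false_eq_true]

theorem renyiSum_jointly_concave {α t : ℝ} (hα0 : 0 < α) (hα1 : α < 1) (ht0 : 0 ≤ t)
    (ht1 : t ≤ 1) {P1 P2 Q1 Q2 : X → ℝ} (hP1 : ∀ x, 0 ≤ P1 x) (hP2 : ∀ x, 0 ≤ P2 x)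
    (hQ1 : ∀ x, 0 ≤ Q1 x) (hQ2 : ∀ x, 0 ≤ Q2 x) :
    t * renyiSum α P1 P2 + (1 - t) * renyiSum α Q1 Q2 ≤
      renyiSum α (fun x => t * P1 x + (1 - t) * Q1 x) (fun x => t * P2 x + (1 - t) * Q2 x) := by
  simp only [renyiSum, Finset.mul_sum, ← Finset.sum_add_distrib]
  exact Finset.sum_le_sum fun x _ =>
    rpow_mul_rpow_one_sub_concave hα0 hα1 ht0 ht1 (hP1 x) (hP2 x) (hQ1 x) (hQ2 x)

theorem renyiSum_mix_right_le_rpow_mul_rpow {α t : ℝ} (hα : 1 < α) (ht0 : 0 < t) (ht1 : t < 1)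
    {P Q1 Q2 : X → ℝ} (hP : ∀ x, 0 ≤ P x) (hQ1 : ∀ x, 0 ≤ Q1 x) (hQ2 : ∀ x, 0 ≤ Q2 x)
    (hPQ1 : ∀ x, 0 < P x → 0 < Q1 x) (hPQ2 : ∀ x, 0 < P x → 0 < Q2 x) :
    renyiSum α P (fun x => t * Q1 x + (1 - t) * Q2 x) ≤
      renyiSum α P Q1 ^ t * renyiSum α P Q2 ^ (1 - t) := by
  calc renyiSum α P (fun x => t * Q1 x + (1 - t) * Q2 x)
      ≤ ∑ x, P x ^ α * ((Q1 x ^ (1 - α)) ^ t * (Q2 x ^ (1 - α)) ^ (1 - t)) := by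
        refine Finset.sum_le_sum fun x _ => ?_
        rcases (hP x).eq_or_lt with hPx | hPx
        · simp [← hPx, zero_rpow (zero_lt_one.trans hα).ne']
        · exact mul_le_mul_of_nonneg_left (rpow_mix_le_rpow_mul_rpow_of_nonpos (by linarith)
            ht0.le ht1.le (hPQ1 x hPx) (hPQ2 x hPx)) (by positivity)
    _ ≤ renyiSum α P Q1 ^ t * renyiSum α P Q2 ^ (1 - t) :=
        sum_mul_rpow_mul_rpow_one_sub_le Finset.univ ht0 ht1
          (fun x _ => by have := hP x; positivity) (fun x _ => by have := hQ1 x; positivity)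
          (fun x _ => by have := hQ2 x; positivity)

theorem renyiDiv_mix_le_of_lt_one {α t : ℝ} (hα0 : 0 < α) (hα1 : α < 1) (ht0 : 0 ≤ t)
    (ht1 : t ≤ 1) {P1 P2 Q1 Q2 : X → ℝ} (hP1 : ∀ x, 0 ≤ P1 x) (hP2 : ∀ x, 0 ≤ P2 x)
    (hQ1 : ∀ x, 0 ≤ Q1 x) (hQ2 : ∀ x, 0 ≤ Q2 x) :
    renyiDiv α (fun x => t * P1 x + (1 - t) * Q1 x) (fun x => t * P2 x + (1 - t) * Q2 x) ≤
      (t : EReal) * renyiDiv α P1 P2 + ((1 - t : ℝ) : EReal) * renyiDiv α Q1 Q2 := by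
  rcases ht0.eq_or_lt with rfl | ht0
  · simp
  rcases ht1.eq_or_lt with rfl | ht1
  · simp
  have hD := fun {P Q : X → ℝ} => renyiDiv_eq_coe_iff (P := P) (Q := Q) hα0.ne' hα1.ne
  refine EReal.le_coe_mul_add_coe_mul_of_forall_coe ht0 ht1 (renyiDiv_ne_bot _ _ _)
    (renyiDiv_ne_bot _ _ _) fun a b ha hb => ?_
  obtain ⟨-, hA, rfl⟩ := (hD hP1 hP2).1 ha
  obtain ⟨-, hB, rfl⟩ := (hD hQ1 hQ2).1 hb
  have hconc := renyiSum_jointly_concave hα0 hα1 ht0.le ht1.le hP1 hP2 hQ1 hQ2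
  have ht1' : 0 < 1 - t := sub_pos.2 ht1
  have hM := (show 0 < t * renyiSum α P1 P2 + (1 - t) * renyiSum α Q1 Q2 by positivity).trans_le
    hconc
  have hmix1 := fun x => mul_add_one_sub_mul_nonneg ht0.le ht1.le (hP1 x) (hQ1 x)
  have hmix2 := fun x => mul_add_one_sub_mul_nonneg ht0.le ht1.le (hP2 x) (hQ2 x)
  rw [(hD hmix1 hmix2).2 ⟨fun h => absurd h hα1.not_gt, hM, rfl⟩, EReal.coe_le_coe_iff]
  have hlog : t * log (renyiSum α P1 P2) + (1 - t) * log (renyiSum α Q1 Q2) ≤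
      log (renyiSum α _ _) :=
    (strictConcaveOn_log_Ioi.concaveOn.2 hA hB ht0.le ht1'.le (by ring)).trans
      (log_le_log (by positivity) hconc)
  have hc : 1 / (α - 1) < 0 := one_div_neg.2 (sub_neg.2 hα1)
  linarith [mul_le_mul_of_nonpos_left hlog hc.le]

theorem renyiDiv_mix_right_le_of_one_lt {α t : ℝ} (hα : 1 < α) (ht0 : 0 ≤ t) (ht1 : t ≤ 1)
    {P Q1 Q2 : X → ℝ} (hP : ∀ x, 0 ≤ P x) (hQ1 : ∀ x, 0 ≤ Q1 x) (hQ2 : ∀ x, 0 ≤ Q2 x) :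
    renyiDiv α P (fun x => t * Q1 x + (1 - t) * Q2 x) ≤
      (t : EReal) * renyiDiv α P Q1 + ((1 - t : ℝ) : EReal) * renyiDiv α P Q2 := by
  rcases ht0.eq_or_lt with rfl | ht0
  · simp
  rcases ht1.eq_or_lt with rfl | ht1
  · simp
  have hα0 : α ≠ 0 := (zero_lt_one.trans hα).ne'
  have hD := fun {P Q : X → ℝ} => renyiDiv_eq_coe_iff (P := P) (Q := Q) hα0 hα.ne'
  refine EReal.le_coe_mul_add_coe_mul_of_forall_coe ht0 ht1 (renyiDiv_ne_bot _ _ _)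
    (renyiDiv_ne_bot _ _ _) fun a b ha hb => ?_
  obtain ⟨hPQ1, hA, rfl⟩ := (hD hP hQ1).1 ha
  obtain ⟨hPQ2, hB, rfl⟩ := (hD hP hQ2).1 hb
  have ht1' : 0 < 1 - t := sub_pos.2 ht1
  have hmix : ∀ x, 0 < P x → 0 < t * Q1 x + (1 - t) * Q2 x := fun x hx =>
    add_pos (mul_pos ht0 (hPQ1 hα x hx)) (mul_pos ht1' (hPQ2 hα x hx))
  have hmix_nonneg := fun x => mul_add_one_sub_mul_nonneg ht0.le ht1.le (hQ1 x) (hQ2 x)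
  have hM : 0 < renyiSum α P (fun x => t * Q1 x + (1 - t) * Q2 x) := by
    obtain ⟨x, hx, -⟩ := (renyiSum_pos_iff hα0 hα.ne' hP hQ1).1 hA
    exact (renyiSum_pos_iff hα0 hα.ne' hP hmix_nonneg).2 ⟨x, hx, hmix x hx⟩
  rw [(hD hP hmix_nonneg).2 ⟨fun _ => hmix, hM, rfl⟩, EReal.coe_le_coe_iff]
  have hlog : log (renyiSum α P fun x => t * Q1 x + (1 - t) * Q2 x) ≤
      t * log (renyiSum α P Q1) + (1 - t) * log (renyiSum α P Q2) := by
    have := log_le_log hM (renyiSum_mix_right_le_rpow_mul_rpow hα ht0 ht1 hP hQ1 hQ2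
      (hPQ1 hα) (hPQ2 hα))
    rwa [log_mul (by positivity) (by positivity), log_rpow hA, log_rpow hB] at this
  have hc : 0 < 1 / (α - 1) := one_div_pos.2 (sub_pos.2 hα)
  linarith [mul_le_mul_of_nonneg_left hlog hc.le]

end Renyi

theorem renyi_div_convex {X : Type*} [Fintype X] :
    (∀ α : ℝ, 0 < α → α < 1 →
      ∀ P1 P2 Q1 Q2 : X → ℝ, IsPMF P1 → IsPMF P2 → IsPMF Q1 → IsPMF Q2 →
      ∀ t : ℝ, 0 ≤ t → t ≤ 1 →
        renyiDiv α (fun x => t * P1 x + (1 - t) * Q1 x) (fun x => t * P2 x + (1 - t) * Q2 x) ≤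
          ((t : ℝ) : EReal) * renyiDiv α P1 P2 + ((1 - t : ℝ) : EReal) * renyiDiv α Q1 Q2) ∧
    (∀ α : ℝ, 1 < α →
      ∀ P1 P2 Q2 : X → ℝ, IsPMF P1 → IsPMF P2 → IsPMF Q2 →
      ∀ t : ℝ, 0 ≤ t → t ≤ 1 →
        renyiDiv α P1 (fun x => t * P2 x + (1 - t) * Q2 x) ≤
          ((t : ℝ) : EReal) * renyiDiv α P1 P2 + ((1 - t : ℝ) : EReal) * renyiDiv α P1 Q2) :=
  ⟨fun _ hα0 hα1 _ _ _ _ hP1 hP2 hQ1 hQ2 _ ht0 ht1 =>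
    renyiDiv_mix_le_of_lt_one hα0 hα1 ht0 ht1 hP1.1 hP2.1 hQ1.1 hQ2.1,
  fun _ hα _ _ _ hP hQ1 hQ2 _ ht0 ht1 =>
    renyiDiv_mix_right_le_of_one_lt hα ht0 ht1 hP.1 hQ1.1 hQ2.1⟩
end

section
/- For α > 1 (resp. 0 < α < 1), the unique minimizer (resp. maximizer) of Q ↦ (α/(α−1))·D(Q‖P) + H(Q) over distributions Q with support contained in S(P) is the escort distribution Q*(x) = P(x)^α / ∑_{x'} P(x')^α, and the optimal value equals H_α(P). -/
open scoped Classical BigOperators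

/-- The objective `G_α(P;Q) = (α/(α-1))·D(Q‖P) + H(Q)`. -/
noncomputable def Gent {X : Type*} [Fintype X] (α : ℝ) (P Q : X → ℝ) : EReal :=
  ((α / (α - 1) : ℝ) : EReal) * klDiv Q P + ((shannonEntropy Q : ℝ) : EReal)

lemma gibbs_pt (q r : ℝ) (hq : 0 ≤ q) (hr0 : 0 ≤ r) (h : 0 < q → 0 < r) :
    q - r ≤ q * Real.log (q / r) ∧ (q - r = q * Real.log (q / r) → q = r) := by
  rcases hq.eq_or_lt with h0 | hqpos
  · refine ⟨by rw [← h0]; simpa using hr0, fun heq => ?_⟩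
    rw [← h0] at heq ⊢
    simpa using (by simpa using heq.symm : r = 0).symm
  · have hrpos := h hqpos
    have hlog : Real.log (r / q) ≤ r / q - 1 := Real.log_le_sub_one_of_pos (by positivity)
    have hlogdiv : Real.log (q / r) = - Real.log (r / q) := by
      rw [Real.log_div hqpos.ne' hrpos.ne', Real.log_div hrpos.ne' hqpos.ne']; ring
    have hkey : q * (r / q - 1) = r - q := by field_simp
    constructor
    · rw [hlogdiv]
      have := mul_le_mul_of_nonneg_left hlog hqpos.le
      linarith [hkey ▸ this]
    · intro heq
      by_contra hne
      have h1 : r / q ≠ 1 := by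
        intro hh
        exact hne (by field_simp at hh; linarith)
      have hstr := Real.log_lt_sub_one_of_pos (show (0:ℝ) < r/q by positivity) h1
      have := mul_lt_mul_of_pos_left hstr hqpos
      rw [hlogdiv] at heq
      nlinarith

lemma gibbs_sum {X : Type*} [Fintype X] (Q R : X → ℝ) (hQ : IsPMF Q) (hR : IsPMF R)
    (h : ∀ x, 0 < Q x → 0 < R x) :
    0 ≤ ∑ x, Q x * Real.log (Q x / R x) ∧
    (∑ x, Q x * Real.log (Q x / R x) = 0 → Q = R) := by
  have hpt : ∀ x ∈ Finset.univ, Q x - R x ≤ Q x * Real.log (Q x / R x) :=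
    fun x _ => (gibbs_pt (Q x) (R x) (hQ.1 x) (hR.1 x) (h x)).1
  have hsum0 : ∑ x, (Q x - R x) = 0 := by
    rw [Finset.sum_sub_distrib, hQ.2, hR.2]; ring
  have hle : (0:ℝ) ≤ ∑ x, Q x * Real.log (Q x / R x) := by
    calc (0:ℝ) = ∑ x, (Q x - R x) := hsum0.symm
    _ ≤ _ := Finset.sum_le_sum hpt
  refine ⟨hle, fun heq => ?_⟩
  have hall := (Finset.sum_eq_sum_iff_of_le hpt).mp (by rw [heq, hsum0])
  funext x
  exact (gibbs_pt (Q x) (R x) (hQ.1 x) (hR.1 x) (h x)).2 (hall x (Finset.mem_univ x))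

theorem renyi_entropy_unique_optimizer {X : Type*} [Fintype X] (P : X → ℝ) (hP : IsPMF P)
    (α : ℝ) (hα0 : 0 < α) (hα1 : α ≠ 1)
    (Qstar : X → ℝ) (hQstar : Qstar = fun x => P x ^ α / ∑ x', P x' ^ α) :
    Gent α P Qstar = ((renyiEntropy α P : ℝ) : EReal) ∧
    (1 < α →
      (∀ Q : X → ℝ, IsPMF Q → (∀ x, 0 < Q x → 0 < P x) → Gent α P Qstar ≤ Gent α P Q) ∧
      (∀ Q : X → ℝ, IsPMF Q → (∀ x, 0 < Q x → 0 < P x) →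
        Gent α P Q = Gent α P Qstar → Q = Qstar)) ∧
    (α < 1 →
      (∀ Q : X → ℝ, IsPMF Q → (∀ x, 0 < Q x → 0 < P x) → Gent α P Q ≤ Gent α P Qstar) ∧
      (∀ Q : X → ℝ, IsPMF Q → (∀ x, 0 < Q x → 0 < P x) →
        Gent α P Q = Gent α P Qstar → Q = Qstar)) := by
  have hα1' : α - 1 ≠ 0 := sub_ne_zero.mpr hα1
  have hex : ∃ x, 0 < P x := by
    by_contra hc
    push_neg at hc
    have h0 : ∑ x, P x = 0 :=
      Finset.sum_eq_zero (fun x _ => le_antisymm (hc x) (hP.1 x))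
    rw [hP.2] at h0
    norm_num at h0
  have hZpos : 0 < ∑ x', P x' ^ α := by
    obtain ⟨x0, hx0⟩ := hex
    exact Finset.sum_pos' (fun x _ => Real.rpow_nonneg (hP.1 x) α)
      ⟨x0, Finset.mem_univ x0, Real.rpow_pos_of_pos hx0 α⟩
  have hQsnn : ∀ x, 0 ≤ Qstar x := by
    intro x
    rw [hQstar]
    exact div_nonneg (Real.rpow_nonneg (hP.1 x) α) hZpos.le
  have hQsPMF : IsPMF Qstar := by
    refine ⟨hQsnn, ?_⟩
    rw [hQstar]
    simp only
    rw [← Finset.sum_div, div_self hZpos.ne']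
  have hQspos : ∀ x, 0 < Qstar x ↔ 0 < P x := by
    intro x
    constructor
    · intro hq
      rcases (hP.1 x).eq_or_lt with h0 | h
      · exfalso
        rw [hQstar] at hq
        simp only at hq
        rw [← h0, Real.zero_rpow hα0.ne', zero_div] at hq
        exact lt_irrefl 0 hq
      · exact h
    · intro hp
      rw [hQstar]
      exact div_pos (Real.rpow_pos_of_pos hp α) hZpos
  have hQssupp : ∀ x, 0 < Qstar x → 0 < P x := fun x hx => (hQspos x).1 hx
  have key : ∀ Q : X → ℝ, IsPMF Q → (∀ x, 0 < Q x → 0 < P x) →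
      Gent α P Q = (((1/(α-1)) * (∑ x, Q x * Real.log (Q x / Qstar x))
        + renyiEntropy α P : ℝ) : EReal) := by
    intro Q hQ hs
    unfold Gent klDiv
    rw [if_pos hs, ← EReal.coe_mul, ← EReal.coe_add]
    congr 1
    unfold shannonEntropy renyiEntropy
    have hpt : ∀ x ∈ Finset.univ,
        α/(α-1) * (Q x * Real.log (Q x / P x)) - Q x * Real.log (Q x)
        = 1/(α-1) * (Q x * Real.log (Q x / Qstar x))
          + Q x * ((1/(1-α)) * Real.log (∑ x', P x' ^ α)) := by
      intro x _
      rcases (hQ.1 x).eq_or_lt with h0 | hq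
      · rw [← h0]; ring
      · have hp := hs x hq
        have hqs : 0 < Qstar x := (hQspos x).2 hp
        rw [Real.log_div hq.ne' hp.ne', Real.log_div hq.ne' hqs.ne']
        have hlqs : Real.log (Qstar x)
            = α * Real.log (P x) - Real.log (∑ x', P x' ^ α) := by
          rw [hQstar]
          simp only
          rw [Real.log_div (Real.rpow_pos_of_pos hp α).ne' hZpos.ne', Real.log_rpow hp]
        rw [hlqs]
        have h1 : (1:ℝ) - α ≠ 0 := fun hh => hα1' (by linarith)
        field_simp
        ring
    have lhs_eq : α/(α-1) * (∑ x, Q x * Real.log (Q x / P x))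
        + (-∑ x, Q x * Real.log (Q x))
        = ∑ x, (α/(α-1) * (Q x * Real.log (Q x / P x)) - Q x * Real.log (Q x)) := by
      rw [Finset.sum_sub_distrib, Finset.mul_sum]
      ring
    have rhs_eq : 1/(α-1) * (∑ x, Q x * Real.log (Q x / Qstar x))
        + (1/(1-α)) * Real.log (∑ x', P x' ^ α)
        = ∑ x, (1/(α-1) * (Q x * Real.log (Q x / Qstar x))
          + Q x * ((1/(1-α)) * Real.log (∑ x', P x' ^ α))) := by
      rw [Finset.sum_add_distrib, ← Finset.mul_sum, ← Finset.sum_mul, hQ.2]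
      ring
    rw [lhs_eq, rhs_eq]
    exact Finset.sum_congr rfl hpt
  have hD0 : ∑ x, Qstar x * Real.log (Qstar x / Qstar x) = 0 := by
    apply Finset.sum_eq_zero
    intro x _
    rcases (hQsnn x).eq_or_lt with h0 | hq
    · rw [← h0]; ring
    · rw [div_self hq.ne', Real.log_one, mul_zero]
  have hGstar : Gent α P Qstar = ((renyiEntropy α P : ℝ) : EReal) := by
    rw [key Qstar hQsPMF hQssupp, hD0]
    norm_num
  refine ⟨hGstar, ?_, ?_⟩
  · intro hα
    have hc : (0:ℝ) < 1/(α-1) := by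
      have : (0:ℝ) < α - 1 := by linarith
      positivity
    constructor
    · intro Q hQ hs
      rw [key Q hQ hs, hGstar, EReal.coe_le_coe_iff]
      have hD := (gibbs_sum Q Qstar hQ hQsPMF (fun x hx => (hQspos x).2 (hs x hx))).1
      nlinarith
    · intro Q hQ hs heq
      rw [key Q hQ hs, hGstar] at heq
      have heq' : (1/(α-1)) * (∑ x, Q x * Real.log (Q x / Qstar x))
          + renyiEntropy α P = renyiEntropy α P := by exact_mod_cast heq
      have hD := gibbs_sum Q Qstar hQ hQsPMF (fun x hx => (hQspos x).2 (hs x hx))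
      apply hD.2
      have h0 : (1/(α-1)) * (∑ x, Q x * Real.log (Q x / Qstar x)) = 0 := by linarith
      rcases mul_eq_zero.mp h0 with h | h
      · exact absurd h hc.ne'
      · exact h
  · intro hα
    have hc : 1/(α-1) < 0 := by
      apply div_neg_of_pos_of_neg one_pos
      linarith
    constructor
    · intro Q hQ hs
      rw [key Q hQ hs, hGstar, EReal.coe_le_coe_iff]
      have hD := (gibbs_sum Q Qstar hQ hQsPMF (fun x hx => (hQspos x).2 (hs x hx))).1
      nlinarith
    · intro Q hQ hs heq
      rw [key Q hQ hs, hGstar] at heq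
      have heq' : (1/(α-1)) * (∑ x, Q x * Real.log (Q x / Qstar x))
          + renyiEntropy α P = renyiEntropy α P := by exact_mod_cast heq
      have hD := gibbs_sum Q Qstar hQ hQsPMF (fun x hx => (hQspos x).2 (hs x hx))
      apply hD.2
      have h0 : (1/(α-1)) * (∑ x, Q x * Real.log (Q x / Qstar x)) = 0 := by linarith
      rcases mul_eq_zero.mp h0 with h | h
      · exact absurd h hc.ne
      · exact h
end
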